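/- arXiv:1103.0170 — 2 statements merged into one kernel-verified Lean document; each statement's English description precedes it below -/
import Mathlib

section
/- Let k be a field, n ≥ 1, a_0, …, a_{n−1} ∈ k, and L(y) = ∂ⁿ(y) + Σ_{i=0}^{n−1} a_i·∂ⁱ(y). Let y_1, …, y_n ∈ Hk be k-linearly independent solutions of L(y) = 0 and let B ∈ M(n,k) be the matrix with ∂(y_j) = Σ_i y_i·B_{ij}. Then the matrices I, B, B², …, B^{n−1} are linearly independent over k (indeed over the algebraic closure k̄), and Span_k{Bᵐ : m ∈ ℕ} = Span_k{I, B, …, B^{n−1}}. -/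
/-!
The derivation `∂` preserves `V = span_k {y_j}` and acts on it with matrix `B`. Since `∂` is
the shift of coefficients, `p(∂) z = 0` says that the coefficients of `z` satisfy the linear
recurrence with characteristic polynomial `p`. Taking `p` the minimal polynomial of `B`, all of
`V` lies in the solution space of that recurrence, whose dimension is `deg p`; hence
`n ≤ deg p`, which is the linear independence of `I, B, …, B^{n-1}`. Independence of a family of
matrices survives extension of scalars, and `deg p ≤ n` (Cayley–Hamilton) gives the span.
-/

open scoped BigOperators

set_option linter.unusedSectionVars false

/-- The ring of Hurwitz series over `R`: all sequences `ℕ → R`, with termwise addition and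
the Hurwitz (binomial-convolution) product. -/
def HS (R : Type*) : Type _ := ℕ → R

namespace HS

variable {R : Type*} [CommRing R]

instance : AddCommGroup (HS R) := Pi.addCommGroup

instance {S : Type*} [Semiring S] [Module S R] : Module S (HS R) :=
  Pi.module ℕ (fun _ => R) S

@[simp] theorem add_apply (a b : HS R) (n : ℕ) : (a + b) n = a n + b n := rfl
@[simp] theorem zero_apply (n : ℕ) : (0 : HS R) n = 0 := rfl
@[simp] theorem smul_apply {S : Type*} [Semiring S] [Module S R] (c : S) (a : HS R) (n : ℕ) :
    (c • a) n = c • a n := rfl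

instance : Mul (HS R) :=
  ⟨fun a b n => ∑ j ∈ Finset.range (n + 1), (n.choose j : R) * a j * b (n - j)⟩

theorem mul_apply (a b : HS R) (n : ℕ) :
    (a * b) n = ∑ j ∈ Finset.range (n + 1), (n.choose j : R) * a j * b (n - j) := rfl

instance : One (HS R) := ⟨fun n => if n = 0 then 1 else 0⟩

theorem one_apply (n : ℕ) : (1 : HS R) n = if n = 0 then 1 else 0 := rfl

private theorem hmul_comm (a b : HS R) : a * b = b * a := by
  funext n
  rw [mul_apply, mul_apply, ← Finset.sum_range_reflect]
  refine Finset.sum_congr rfl fun j hj => ?_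
  have hj' : j ≤ n := Nat.lt_succ_iff.mp (Finset.mem_range.mp hj)
  have h1 : n + 1 - 1 - j = n - j := by omega
  rw [h1, Nat.choose_symm hj', Nat.sub_sub_self hj']
  ring

private theorem hone_mul (a : HS R) : 1 * a = a := by
  funext n
  rw [mul_apply]
  rw [Finset.sum_eq_single 0]
  · simp [one_apply]
  · intro j hj hj0
    simp [one_apply, hj0]
  · intro h
    exact absurd (Finset.mem_range.mpr (Nat.succ_pos n)) h

private theorem hmul_assoc (a b c : HS R) : a * b * c = a * (b * c) := by
  funext n
  rw [mul_apply, mul_apply]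
  simp_rw [mul_apply, Finset.mul_sum]
  simp_rw [Finset.sum_mul]
  rw [Finset.sum_sigma', Finset.sum_sigma']
  refine Finset.sum_nbij' (fun x => ⟨x.2, x.1 - x.2⟩) (fun x => ⟨x.1 + x.2, x.1⟩)
    ?_ ?_ ?_ ?_ ?_
  · rintro ⟨p, i⟩ h
    simp only [Finset.mem_sigma, Finset.mem_range] at h ⊢
    omega
  · rintro ⟨i, j⟩ h
    simp only [Finset.mem_sigma, Finset.mem_range] at h ⊢
    omega
  · rintro ⟨p, i⟩ h
    simp only [Finset.mem_sigma, Finset.mem_range] at h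
    dsimp only
    exact congrArg (fun m => (⟨m, i⟩ : Σ _ : ℕ, ℕ)) (by omega)
  · rintro ⟨i, j⟩ h
    simp only [Finset.mem_sigma, Finset.mem_range] at h
    dsimp only
    exact congrArg (fun m => (⟨i, m⟩ : Σ _ : ℕ, ℕ)) (by omega)
  · rintro ⟨p, i⟩ h
    simp only [Finset.mem_sigma, Finset.mem_range] at h
    have hip : i ≤ p := by omega
    have hpn : p ≤ n := by omega
    have h2 : n - i - (p - i) = n - p := by omega
    have h3 : (n.choose p : R) * (p.choose i : R)
        = (n.choose i : R) * ((n - i).choose (p - i) : R) := by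
      rw [← Nat.cast_mul, ← Nat.cast_mul, Nat.choose_mul hip]
    simp only [h2]
    calc ((n.choose p : R) * ((p.choose i : R) * a i * b (p - i)) * c (n - p))
        = ((n.choose p : R) * (p.choose i : R)) * (a i * b (p - i) * c (n - p)) := by ring
      _ = ((n.choose i : R) * ((n - i).choose (p - i) : R)) * (a i * b (p - i) * c (n - p)) := by
          rw [h3]
      _ = (n.choose i : R) * a i * (((n - i).choose (p - i) : R) * b (p - i) * c (n - p)) := by
          ring

instance : CommRing (HS R) :=
  { (inferInstance : AddCommGroup (HS R)) with
    mul := (· * ·)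
    one := (1 : HS R)
    mul_assoc := hmul_assoc
    one_mul := hone_mul
    mul_one := fun a => by rw [hmul_comm]; exact hone_mul a
    left_distrib := fun a b c => by
      funext n
      simp only [mul_apply, add_apply]
      rw [← Finset.sum_add_distrib]
      exact Finset.sum_congr rfl fun j _ => by ring
    right_distrib := fun a b c => by
      funext n
      simp only [mul_apply, add_apply]
      rw [← Finset.sum_add_distrib]
      exact Finset.sum_congr rfl fun j _ => by ring
    zero_mul := fun a => by funext n; simp [mul_apply]
    mul_zero := fun a => by funext n; simp [mul_apply]
    mul_comm := hmul_comm }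

/-- The derivation `∂` on Hurwitz series: the left-shift. -/
def D (a : HS R) : HS R := fun n => a (n + 1)

@[simp] theorem D_apply (a : HS R) (n : ℕ) : D a n = a (n + 1) := rfl

/-- The exponential `exp β = (1, β, β², …)`. -/
def hexp (b : R) : HS R := fun n => b ^ n

@[simp] theorem hexp_apply (b : R) (n : ℕ) : hexp b n = b ^ n := rfl

/-- The divided power `x^{[i]}`: the sequence with `1` in position `i` and `0` elsewhere. -/
def dpow (i : ℕ) : HS R := fun n => if n = i then 1 else 0

/-- The constant Hurwitz series `(r, 0, 0, …)`. -/
def const (r : R) : HS R := fun n => if n = 0 then r else 0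

/-- Entrywise map of a Hurwitz series along a map of coefficients. -/
def map {K L : Type*} (f : K → L) (a : HS K) : HS L := fun n => f (a n)

/-- `σ` is a differential automorphism of the subspace `V` of `HS k`:
a `k`-linear automorphism of `V` commuting with the derivation `D`. -/
def IsDiffAut {k : Type*} [Field k] (V : Submodule k (HS k)) (σ : V ≃ₗ[k] V) : Prop :=
  ∀ v w : V, (w : HS k) = D (v : HS k) → (σ w : HS k) = D (σ v : HS k)

end HS

/-- The nilpotent upper Jordan block of size `m` (ones on the superdiagonal). -/
def jordanBlock (k : Type*) [Field k] (m : ℕ) : Matrix (Fin m) (Fin m) k :=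
  Matrix.of fun i j => if (i : ℕ) + 1 = (j : ℕ) then 1 else 0

/-- The centralizer of a matrix `A` inside `GL(m, k)`, as a set of matrices. -/
def matCent {k : Type*} [Field k] {m : ℕ} (A : Matrix (Fin m) (Fin m) k) :
    Set (Matrix (Fin m) (Fin m) k) :=
  {T | IsUnit T ∧ A * T = T * A}

/-- The group `U(m, k)` of upper triangular matrices in `GL(m, k)` with all diagonal
entries equal to `1`, as a set of matrices. -/
def uniUpper (k : Type*) [Field k] (m : ℕ) : Set (Matrix (Fin m) (Fin m) k) :=
  {T | IsUnit T ∧ (∀ i, T i i = 1) ∧ ∀ i j : Fin m, (j : ℕ) < (i : ℕ) → T i j = 0}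

open Polynomial

/-- For monic `q` of degree `d`: the recurrence `u (t + d) = -∑_{i < d} q_i u (t + i)`,
whose characteristic polynomial is `q`. -/
def LinearRecurrence.ofMonic {R : Type*} [CommRing R] (q : R[X]) : LinearRecurrence R :=
  ⟨q.natDegree, fun i => -q.coeff i⟩

theorem LinearRecurrence.isSolution_ofMonic {R : Type*} [CommRing R] {q : R[X]} (hq : q.Monic)
    {u : ℕ → R} (hu : ∀ t, ∑ i ∈ Finset.range (q.natDegree + 1), q.coeff i * u (t + i) = 0) :
    (LinearRecurrence.ofMonic q).IsSolution u := by
  intro t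
  have h := hu t
  rw [Finset.sum_range_succ, hq.coeff_natDegree, one_mul] at h
  change u (t + q.natDegree) = ∑ i : Fin q.natDegree, -q.coeff i * u (t + i)
  simp only [neg_mul, Finset.sum_neg_distrib,
    Fin.sum_univ_eq_sum_range (fun i => q.coeff i * u (t + i))]
  exact eq_neg_of_add_eq_zero_right h

theorem linearIndependent_pow_of_le_natDegree_minpoly {K S : Type*} [Field K] [Ring S]
    [Algebra K S] {x : S} {n : ℕ} (h : n ≤ (minpoly K x).natDegree) :
    LinearIndependent K fun i : Fin n => x ^ (i : ℕ) :=
  (linearIndependent_pow x).comp (Fin.castLE h) (Fin.castLE_injective h)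

namespace Matrix

variable {ι : Type*} [Fintype ι] [DecidableEq ι]

theorem span_range_pow_eq_span_range_pow_fin {K : Type*} [Field K] (A : Matrix ι ι K) {n : ℕ}
    (hn : Fintype.card ι ≤ n) :
    Submodule.span K (Set.range fun m : ℕ => A ^ m)
      = Submodule.span K (Set.range fun i : Fin n => A ^ (i : ℕ)) := by
  have hdeg : (minpoly K A).natDegree ≤ n :=
    (natDegree_le_of_dvd (minpoly_dvd_charpoly A) A.charpoly_monic.ne_zero).trans
      (by rwa [charpoly_natDegree_eq_dim])
  refine le_antisymm (Submodule.span_le.2 ?_) (Submodule.span_mono ?_)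
  · rintro _ ⟨m, rfl⟩
    refine Submodule.span_mono ?_ ((isIntegral A).mem_span_pow ⟨X ^ m, by simp⟩)
    rintro _ ⟨i, rfl⟩
    exact ⟨Fin.castLE hdeg i, rfl⟩
  · rintro _ ⟨i, rfl⟩
    exact ⟨i, rfl⟩

theorem linearIndependent_map_algebraMap {K : Type*} (L : Type*) [Field K] [Field L] [Algebra K L]
    {κ : Type*} {v : κ → Matrix ι ι K} (hv : LinearIndependent K v) :
    LinearIndependent L fun i => (v i).map (algebraMap K L) := by
  have huncurried : LinearIndependent K fun i (p : ι × ι) => v i p.1 p.2 :=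
    hv.map' (LinearEquiv.curry K K ι ι).symm.toLinearMap (LinearEquiv.ker _)
  exact ((linearIndependent_algebraMap_comp_iff (S := L)).2 huncurried).map'
    (LinearEquiv.curry L L ι ι).toLinearMap (LinearEquiv.ker _)

end Matrix

namespace HS

variable {ι : Type*} [Fintype ι] [DecidableEq ι]

section CommRing

variable {R : Type*} [CommRing R]

theorem sum_apply {κ : Type*} (s : Finset κ) (f : κ → HS R) (t : ℕ) :
    (∑ i ∈ s, f i) t = ∑ i ∈ s, f i t :=
  Finset.sum_apply t s f

variable {y : ι → HS R} {B : Matrix ι ι R}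

theorem apply_add_eq_sum_pow (hB : ∀ j, D (y j) = ∑ i, B i j • y i) (m t : ℕ) (j : ι) :
    y j (t + m) = ∑ i, (B ^ m) i j * y i t := by
  induction m generalizing t j with
  | zero => simp [Matrix.one_apply]
  | succ m ih =>
    have hB' : ∀ i, y i (t + 1) = ∑ l, B l i * y l t := fun i => by
      simpa [sum_apply] using congrFun (hB i) t
    rw [← add_assoc, add_right_comm, ih, pow_succ']
    simp only [hB', Finset.mul_sum, Matrix.mul_apply, Finset.sum_mul]
    rw [Finset.sum_comm]
    exact Finset.sum_congr rfl fun l _ => Finset.sum_congr rfl fun i _ => by ring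

theorem sum_coeff_mul_apply_add_eq_zero (hB : ∀ j, D (y j) = ∑ i, B i j • y i) {p : R[X]}
    (hp : aeval B p = 0) (j : ι) (t : ℕ) :
    ∑ i ∈ Finset.range (p.natDegree + 1), p.coeff i * y j (t + i) = 0 := by
  have hentry : ∀ l, aeval B p l j = 0 := fun l => by rw [hp]; rfl
  simp only [aeval_eq_sum_range, Matrix.sum_apply, Matrix.smul_apply, smul_eq_mul] at hentry
  simp only [apply_add_eq_sum_pow hB, Finset.mul_sum, ← mul_assoc]
  rw [Finset.sum_comm]
  simp [← Finset.sum_mul, hentry]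

end CommRing

theorem card_le_natDegree_minpoly {k : Type*} [Field k] {y : ι → HS k}
    (hind : LinearIndependent k y) {B : Matrix ι ι k} (hB : ∀ j, D (y j) = ∑ i, B i j • y i) :
    Fintype.card ι ≤ (minpoly k B).natDegree := by
  set E := LinearRecurrence.ofMonic (minpoly k B)
  have hsol : ∀ j, y j ∈ E.solSpace := fun j =>
    (E.is_sol_iff_mem_solSpace _).1 <| LinearRecurrence.isSolution_ofMonic
      (minpoly.monic B.isIntegral) (sum_coeff_mul_apply_add_eq_zero hB (minpoly.aeval k B) j)
  have hind' : LinearIndependent k fun j => (⟨y j, hsol j⟩ : E.solSpace) :=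
    LinearIndependent.of_comp E.solSpace.subtype hind
  have hcard := (hind'.map' E.toInit.toLinearMap E.toInit.ker).fintype_card_le_finrank
  rwa [Module.finrank_fin_fun] at hcard

end HS

theorem stmt_14_general {k : Type*} [Field k] (n : ℕ)
    (y : Fin n → HS k)
    (hind : LinearIndependent k y)
    (B : Matrix (Fin n) (Fin n) k)
    (hB : ∀ j, HS.D (y j) = ∑ i, B i j • y i) :
    LinearIndependent k (fun i : Fin n => B ^ (i : ℕ)) ∧
    LinearIndependent (AlgebraicClosure k)
      (fun i : Fin n => B.map (algebraMap k (AlgebraicClosure k)) ^ (i : ℕ)) ∧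
    Submodule.span k (Set.range fun m : ℕ => B ^ m)
      = Submodule.span k (Set.range fun i : Fin n => B ^ (i : ℕ)) := by
  have hdeg : n ≤ (minpoly k B).natDegree := by
    simpa using HS.card_le_natDegree_minpoly hind hB
  have hpow := linearIndependent_pow_of_le_natDegree_minpoly hdeg
  refine ⟨hpow, ?_, B.span_range_pow_eq_span_range_pow_fin (Fintype.card_fin n).le⟩
  simpa only [Matrix.map_pow] using Matrix.linearIndependent_map_algebraMap (AlgebraicClosure k) hpow

/-- with `∂Y = Y·B` for `k`-linearly independent solutions of `L(y) = 0`,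
the matrices `I, B, …, B^{n-1}` are linearly independent over `k` (indeed over `k̄`),
and `Span_k{Bᵐ | m ∈ ℕ} = Span_k{I, B, …, B^{n-1}}`. -/
theorem stmt_14 {k : Type*} [Field k] (n : ℕ) (hn : 1 ≤ n) (a : Fin n → k)
    (y : Fin n → HS k)
    (hsol : ∀ j, HS.D^[n] (y j) + ∑ i : Fin n, HS.const (a i) * HS.D^[(i : ℕ)] (y j) = 0)
    (hind : LinearIndependent k y)
    (B : Matrix (Fin n) (Fin n) k)
    (hB : ∀ j, HS.D (y j) = ∑ i, B i j • y i) :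
    LinearIndependent k (fun i : Fin n => B ^ (i : ℕ)) ∧
    LinearIndependent (AlgebraicClosure k)
      (fun i : Fin n => B.map (algebraMap k (AlgebraicClosure k)) ^ (i : ℕ)) ∧
    Submodule.span k (Set.range fun m : ℕ => B ^ m)
      = Submodule.span k (Set.range fun i : Fin n => B ^ (i : ℕ)) :=
  stmt_14_general n y hind B hB
end

section
/- Let k be a field, let y_1, y_2 ∈ Hk be the Fibonacci-type sequences determined by π_0(y_1)=1, π_1(y_1)=0, π_0(y_2)=0, π_1(y_2)=1, and π_{n+2}(y_i) = π_{n+1}(y_i) + π_n(y_i) for all n ∈ ℕ and i = 1,2, and let V = Span_k{y_1, y_2}, the full set of solutions of ∂²(y) − ∂(y) − y = 0 in Hk. Then the map sending σ ∈ G(V|k) to its matrix C_σ in the ordered basis (y_1, y_2) (i.e., σ(y_j) = Σ_i (C_σ)_{ij}·y_i) is a group isomorphism from G(V|k) onto {[[α, β],[β, α+β]] ∈ GL(2,k) : α, β ∈ k}, which equals Span_k{I, B} ∩ GL(2,k) for B = [[0,1],[1,1]]. -/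
open scoped BigOperators

set_option linter.unusedSectionVars false

/-! The solutions of `∂²y = ∂y + y` in `HS k` are the solution space of the Fibonacci recurrence;
reading off the initial values `(y 0, y 1)` gives the basis `(y₁, y₂)`, in which `∂` acts by
`B = [[0, 1], [1, 1]]`. An automorphism commutes with `∂` iff its matrix commutes with `B`, so
`LinearMap.toMatrix` identifies `G(V|k)` with the invertible matrices commuting with `B`, and these
are exactly `[[α, β], [β, α + β]] = α I + β B`. -/

open Module

section MatrixOfEndomorphism

variable {R M ι : Type*} [CommRing R] [AddCommGroup M] [Module R M] [Fintype ι] [DecidableEq ι]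
  (b : Basis ι R M)

theorem LinearMap.apply_basis_eq_sum_toMatrix (f : Module.End R M) (j : ι) :
    f (b j) = ∑ i, toMatrix b b f i j • b i := by
  simpa using Matrix.toLin_self b b (toMatrix b b f) j

theorem LinearMap.commute_toMatrix_iff {f g : Module.End R M} :
    Commute (toMatrix b b f) (toMatrix b b g) ↔ Commute f g := by
  simp only [commute_iff_eq, ← LinearMap.toMatrix_mul, (LinearMap.toMatrix b b).injective.eq_iff]

theorem LinearEquiv.isUnit_toMatrix (σ : M ≃ₗ[R] M) : IsUnit (LinearMap.toMatrix b b σ) :=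
  (LinearMap.isUnit_toMatrix_iff b).2 (LinearMap.GeneralLinearGroup.ofLinearEquiv σ).isUnit

theorem Matrix.exists_linearEquiv_toMatrix_eq {U : Matrix ι ι R} (hU : IsUnit U) :
    ∃ σ : M ≃ₗ[R] M, LinearMap.toMatrix b b σ = U := by
  have hdet : IsUnit (LinearMap.toMatrix b b (Matrix.toLin b b U)).det := by
    rwa [LinearMap.toMatrix_toLin, ← Matrix.isUnit_iff_isUnit_det]
  exact ⟨LinearEquiv.ofIsUnitDet hdet, by simp⟩

theorem LinearMap.range_toMatrix_of_commute (T : Module.End R M)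
    {P : (M ≃ₗ[R] M) → Prop} (hP : ∀ σ, P σ ↔ Commute (σ : Module.End R M) T) :
    Set.range (fun σ : {σ // P σ} => toMatrix b b σ.1) =
      {U | IsUnit U ∧ Commute U (toMatrix b b T)} := by
  ext U
  constructor
  · rintro ⟨σ, rfl⟩
    exact ⟨σ.1.isUnit_toMatrix b, (commute_toMatrix_iff b).2 ((hP σ.1).1 σ.2)⟩
  · rintro ⟨hU, hcomm⟩
    obtain ⟨σ, rfl⟩ := Matrix.exists_linearEquiv_toMatrix_eq b hU
    exact ⟨⟨σ, (hP σ).2 ((commute_toMatrix_iff b).1 hcomm)⟩, rfl⟩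

end MatrixOfEndomorphism

section FibonacciMatrix

variable {R : Type*} [CommRing R]

theorem Matrix.commute_fib_iff {U : Matrix (Fin 2) (Fin 2) R} :
    Commute U !![0, 1; 1, 1] ↔ ∃ x w : R, U = !![x, w; w, x + w] := by
  rw [U.eta_fin_two, commute_iff_eq, Matrix.mul_fin_two, Matrix.mul_fin_two]
  simp only [EmbeddingLike.apply_eq_iff_eq, Matrix.vecCons_inj, and_true]
  grind

theorem Matrix.mem_span_one_fib_iff {U : Matrix (Fin 2) (Fin 2) R} :
    U ∈ Submodule.span R {1, !![0, 1; 1, 1]} ↔ ∃ x w : R, U = !![x, w; w, x + w] := by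
  have hcomb (x w : R) :
      x • (1 : Matrix (Fin 2) (Fin 2) R) + w • !![0, 1; 1, 1] = !![x, w; w, x + w] := by
    ext i j
    fin_cases i <;> fin_cases j <;> simp
  simp only [Submodule.mem_span_pair, hcomb, eq_comm]

end FibonacciMatrix

namespace HS

variable {R : Type*} [CommRing R]

def Dₗ : HS R →ₗ[R] HS R where
  toFun := D
  map_add' _ _ := rfl
  map_smul' _ _ := rfl

theorem isDiffAut_iff_commute {k : Type*} [Field k] {V : Submodule k (HS k)}
    (hV : ∀ v ∈ V, Dₗ v ∈ V) (σ : V ≃ₗ[k] V) :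
    IsDiffAut V σ ↔ Commute (σ : Module.End k V) (Dₗ.restrict hV) := by
  refine ⟨fun h => LinearMap.ext fun v => Subtype.ext (h v _ rfl), fun h v w hw => ?_⟩
  have hw' : w = Dₗ.restrict hV v := Subtype.ext hw
  rw [hw']
  exact congr(($(h.eq) v : HS k))

variable (R) in
def fibRecurrence : LinearRecurrence R := ⟨2, ![1, 1]⟩

variable (R) in
def fibSpace : Submodule R (HS R) := (fibRecurrence R).solSpace

theorem mem_fibSpace_iff {y : HS R} : y ∈ fibSpace R ↔ ∀ n, y (n + 2) = y (n + 1) + y n := by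
  change (∀ n, y (n + 2) = ∑ i : Fin 2, ![1, 1] i * y (n + i)) ↔ _
  simp [Fin.sum_univ_two, add_comm]

theorem coe_fibSpace : (fibSpace R : Set (HS R)) = {y | D (D y) - D y - y = 0} := by
  ext y
  rw [SetLike.mem_coe, mem_fibSpace_iff, Set.mem_ofPred_eq]
  refine ⟨fun h => funext fun n => ?_, fun h n => ?_⟩
  · change y (n + 2) - y (n + 1) - y n = 0
    rw [h, add_sub_cancel_left, sub_self]
  · have hn : y (n + 2) - y (n + 1) - y n = 0 := congrFun h n
    linear_combination hn

theorem Dₗ_mem_fibSpace : ∀ y ∈ fibSpace R, Dₗ y ∈ fibSpace R := by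
  simp only [mem_fibSpace_iff]
  exact fun y hy n => hy (n + 1)

variable (R) in
noncomputable def fibBasis : Basis (Fin 2) R (fibSpace R) := (fibRecurrence R).basis

theorem fibBasis_repr (y : fibSpace R) (i : Fin 2) : (fibBasis R).repr y i = (y : HS R) i := rfl

theorem coe_fibBasis_apply (i j : Fin 2) :
    (fibBasis R i : HS R) j = (Pi.single i 1 : Fin 2 → R) j := by
  rw [← fibBasis_repr, Basis.repr_self, Finsupp.single_eq_pi_single]

theorem fibBasis_eq {y : HS R} (hy : y ∈ fibSpace R) {i : Fin 2}
    (hi : ∀ j : Fin 2, y j = (Pi.single i 1 : Fin 2 → R) j) : fibBasis R i = ⟨y, hy⟩ := by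
  refine (fibBasis R).repr.injective (Finsupp.ext fun j => ?_)
  rw [fibBasis_repr, fibBasis_repr, coe_fibBasis_apply]
  exact (hi j).symm

theorem toMatrix_fibBasis_Dₗ :
    LinearMap.toMatrix (fibBasis R) (fibBasis R) (Dₗ.restrict Dₗ_mem_fibSpace) =
      !![0, 1; 1, 1] := by
  ext i j
  rw [LinearMap.toMatrix_apply, fibBasis_repr]
  change (fibBasis R j : HS R) (i + 1) = _
  have h0 := coe_fibBasis_apply (R := R) j 0
  have h1 := coe_fibBasis_apply (R := R) j 1
  have h2 := mem_fibSpace_iff.1 (fibBasis R j).2 0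
  fin_cases i <;> fin_cases j <;> simp_all

theorem span_eq_fibSpace {y₁ y₂ : HS R} (hy₁ : y₁ ∈ fibSpace R) (hy₂ : y₂ ∈ fibSpace R)
    (h₁ : fibBasis R 0 = ⟨y₁, hy₁⟩) (h₂ : fibBasis R 1 = ⟨y₂, hy₂⟩) :
    Submodule.span R {y₁, y₂} = fibSpace R := by
  have hrange : {y₁, y₂} = (fibSpace R).subtype '' Set.range (fibBasis R) := by
    rw [← Set.range_comp]
    ext y
    simp [Fin.exists_fin_two, h₁, h₂, eq_comm]
  rw [hrange, Submodule.span_image, Basis.span_eq, Submodule.map_subtype_top]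

end HS

/-- Example 2: for the Fibonacci-type solutions `y₁, y₂` of `∂²y - ∂y - y = 0`,
the matrix representation in the basis `(y₁, y₂)` is a group isomorphism from `G(V|k)` onto
`{[[α, β], [β, α+β]]} ∩ GL(2,k) = Span_k{I, B} ∩ GL(2,k)` with `B = [[0,1],[1,1]]`. -/
theorem stmt_19 {k : Type*} [Field k] (y₁ y₂ : HS k)
    (h10 : y₁ 0 = 1) (h11 : y₁ 1 = 0) (h20 : y₂ 0 = 0) (h21 : y₂ 1 = 1)
    (hrec1 : ∀ n : ℕ, y₁ (n + 2) = y₁ (n + 1) + y₁ n)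
    (hrec2 : ∀ n : ℕ, y₂ (n + 2) = y₂ (n + 1) + y₂ n)
    (V : Submodule k (HS k)) (hV : V = Submodule.span k {y₁, y₂})
    (hm1 : y₁ ∈ V) (hm2 : y₂ ∈ V) :
    (V : Set (HS k)) = {y : HS k | HS.D (HS.D y) - HS.D y - y = 0} ∧
    ∃ C : {σ : V ≃ₗ[k] V // HS.IsDiffAut V σ} → Matrix (Fin 2) (Fin 2) k,
      (∀ σ, ((σ.1 ⟨y₁, hm1⟩ : V) : HS k) = C σ 0 0 • y₁ + C σ 1 0 • y₂) ∧
      (∀ σ, ((σ.1 ⟨y₂, hm2⟩ : V) : HS k) = C σ 0 1 • y₁ + C σ 1 1 • y₂) ∧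
      Function.Injective C ∧
      (∀ σ τ ρ, (∀ v : V, ρ.1 v = σ.1 (τ.1 v)) → C ρ = C σ * C τ) ∧
      Set.range C = {U : Matrix (Fin 2) (Fin 2) k | IsUnit U ∧
        ∃ x w : k, U = Matrix.of ![![x, w], ![w, x + w]]} ∧
      {U : Matrix (Fin 2) (Fin 2) k | IsUnit U ∧
          ∃ x w : k, U = Matrix.of ![![x, w], ![w, x + w]]} =
        {U : Matrix (Fin 2) (Fin 2) k | IsUnit U ∧
          U ∈ Submodule.span k {(1 : Matrix (Fin 2) (Fin 2) k),
            Matrix.of ![![0, 1], ![1, 1]]}} := by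
  have hy₁ : y₁ ∈ HS.fibSpace k := HS.mem_fibSpace_iff.2 hrec1
  have hy₂ : y₂ ∈ HS.fibSpace k := HS.mem_fibSpace_iff.2 hrec2
  have hb₁ : HS.fibBasis k 0 = ⟨y₁, hy₁⟩ :=
    HS.fibBasis_eq hy₁ (by simp [Fin.forall_fin_two, h10, h11])
  have hb₂ : HS.fibBasis k 1 = ⟨y₂, hy₂⟩ :=
    HS.fibBasis_eq hy₂ (by simp [Fin.forall_fin_two, h20, h21])
  obtain rfl : V = HS.fibSpace k := hV.trans (HS.span_eq_fibSpace hy₁ hy₂ hb₁ hb₂)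
  set b := HS.fibBasis k
  have hcol (σ : HS.fibSpace k ≃ₗ[k] HS.fibSpace k) (j : Fin 2) :
      (σ (b j) : HS k) = LinearMap.toMatrix b b σ 0 j • (b 0 : HS k) +
        LinearMap.toMatrix b b σ 1 j • (b 1 : HS k) := by
    simpa [Fin.sum_univ_two] using
      congr(($(LinearMap.apply_basis_eq_sum_toMatrix b σ j) : HS k))
  refine ⟨HS.coe_fibSpace, fun σ => LinearMap.toMatrix b b σ.1,
    fun σ => by simpa [hb₁, hb₂] using hcol σ.1 0,
    fun σ => by simpa [hb₁, hb₂] using hcol σ.1 1,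
    fun σ τ h => Subtype.ext (LinearEquiv.toLinearMap_injective
      ((LinearMap.toMatrix b b).injective h)), fun σ τ ρ hρ => ?_, ?_, ?_⟩
  · have hcomp : (ρ.1 : Module.End k (HS.fibSpace k)) = σ.1 * τ.1 := LinearMap.ext hρ
    exact (congrArg (LinearMap.toMatrix b b) hcomp).trans (LinearMap.toMatrix_mul b _ _)
  · rw [LinearMap.range_toMatrix_of_commute b _
      (HS.isDiffAut_iff_commute HS.Dₗ_mem_fibSpace), HS.toMatrix_fibBasis_Dₗ]
    simp only [Matrix.commute_fib_iff]
  · simp only [Matrix.mem_span_one_fib_iff]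
end
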